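/- arXiv:1706.04835 — 4 statements merged into one kernel-verified Lean document; each statement's English description precedes it below -/
import Mathlib

section
/- If f : X → L is a morphism of locales with X locally positive, then the regular image of X in L (the sublocale given by the congruence/nucleus induced by f, equivalently the locale whose frame is the image of the frame homomorphism's right adjoint situation — concretely, the sublocale of L whose opens are ordered as L with U ∼ V iff f*U = f*V) is locally positive. -/
/-- An element `U` of a frame is positive if every cover of `U` is inhabited. -/
def Positive {L : Type*} [Order.Frame L] (U : L) : Prop :=
  ∀ S : Set L, U ≤ sSup S → S.Nonempty

/-- A frame is locally positive if every element is a supremum of positive elements. -/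
def LocallyPositive (L : Type*) [Order.Frame L] : Prop :=
  ∀ U : L, ∃ S : Set L, (∀ V ∈ S, Positive V) ∧ U = sSup S

/-- Positivity of the class of `U` in the regular image of a locale morphism
`f : X → L` (given by the frame homomorphism `f : O(L) → O(X)`): the image frame is
`O(L)/∼` with `U ∼ V` iff `f U = f V`, its order is `[U] ≤ [V]` iff `f U ≤ f V` and
the supremum of a set `S` of classes is the class of `sSup S`.  So `[U]` is positive
iff every set `S ⊆ L` with `f U ≤ f (sSup S)` is nonempty. -/
def ImgPositive {X L : Type*} [Order.Frame X] [Order.Frame L]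
    (f : FrameHom L X) (U : L) : Prop :=
  ∀ S : Set L, f U ≤ f (sSup S) → S.Nonempty

/- In a locally positive frame every nonzero element lies above a positive one, hence is positive.
So if `f U ≠ ⊥`, then `[U]` itself is positive in the regular image, since a cover of `[U]` by
classes `[V]` gives a cover of `f U` by the `f V`; and if `f U = ⊥` there is nothing to prove. -/

theorem Positive.mono {L : Type*} [Order.Frame L] {U V : L} (hU : Positive U) (hUV : U ≤ V) :
    Positive V :=
  fun S hS => hU S (hUV.trans hS)

theorem not_positive_bot (L : Type*) [Order.Frame L] : ¬Positive (⊥ : L) := fun h => by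
  simpa using h ∅ bot_le

theorem LocallyPositive.positive_iff_ne_bot {L : Type*} [Order.Frame L] (hL : LocallyPositive L)
    {U : L} : Positive U ↔ U ≠ ⊥ := by
  refine ⟨fun hU hbot => not_positive_bot L (hbot ▸ hU), fun hU => ?_⟩
  obtain ⟨S, hSpos, rfl⟩ := hL U
  obtain ⟨W, hW⟩ : S.Nonempty := Set.nonempty_iff_ne_empty.2 fun h => hU (h ▸ sSup_empty)
  exact (hSpos W hW).mono (le_sSup hW)

theorem ImgPositive.of_positive_map {X L : Type*} [Order.Frame X] [Order.Frame L]
    (f : FrameHom L X) {U : L} (hU : Positive (f U)) : ImgPositive f U := by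
  intro S hS
  rw [map_sSup] at hS
  obtain ⟨_, V, hV, rfl⟩ := hU (f '' S) hS
  exact ⟨V, hV⟩

/-- If `f : X → L` is a morphism of locales (i.e. a frame homomorphism
`f : O(L) → O(X)`) with `X` locally positive, then the regular image of `X` in `L`
is locally positive: in the quotient frame, every class `[U]` is the supremum of the
classes `[V] ≤ [U]` which are positive. -/
theorem stmt4 {X L : Type*} [Order.Frame X] [Order.Frame L] (f : FrameHom L X)
    (hX : LocallyPositive X) (U : L) :
    f U = f (sSup {V : L | f V ≤ f U ∧ ImgPositive f V}) := by
  refine le_antisymm ?_ ?_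
  · rcases eq_or_ne (f U) ⊥ with hbot | hne
    · exact hbot ▸ bot_le
    have hU : ImgPositive f U := .of_positive_map f (hX.positive_iff_ne_bot.2 hne)
    exact OrderHomClass.mono f (le_sSup ⟨le_rfl, hU⟩)
  · rw [map_sSup]
    exact sSup_le fun _ ⟨_, hV, hfV⟩ => hfV ▸ hV.1
end

section
/- If G is a localic group, then its maximal locally positive sublocale G⁺ is a localic subgroup: the unit factors through G⁺, and the multiplication and inversion maps restrict to G⁺. -/
open CategoryTheory CategoryTheory.Limits

theorem stmt6_general {C : Type u} [Category.{v} C] [HasTerminal C] [HasBinaryProducts C]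
    (P : C → Prop) (hT : P (⊤_ C)) (hProd : ∀ X Y : C, P X → P Y → P (X ⨯ Y))
    (G Gp : C) (i : Gp ⟶ G) (hGp : P Gp)
    (hmax : ∀ (X : C), P X → ∀ f : X ⟶ G, ∃! g : X ⟶ Gp, g ≫ i = f)
    (e : ⊤_ C ⟶ G) (m : G ⨯ G ⟶ G) (ι : G ⟶ G) :
    (∃ e' : ⊤_ C ⟶ Gp, e' ≫ i = e) ∧
    (∃ ι' : Gp ⟶ Gp, ι' ≫ i = i ≫ ι) ∧
    (∃ m' : Gp ⨯ Gp ⟶ Gp, m' ≫ i = prod.map i i ≫ m) :=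
  ⟨(hmax _ hT e).exists, (hmax _ hGp (i ≫ ι)).exists,
    (hmax _ (hProd _ _ hGp hGp) (prod.map i i ≫ m)).exists⟩

/-- Let `C` be a category with a terminal object and binary products (e.g. the
category of locales), and let `P` be the class of "locally positive" objects.
Suppose the terminal object is locally positive and locally positive objects are
closed under binary products.  Let `G` be a group object, given by its unit
`e : 1 ⟶ G`, multiplication `m : G ⨯ G ⟶ G` and inversion `ι : G ⟶ G`, and let
`i : G⁺ ⟶ G` be the maximal locally positive subobject of `G`: `G⁺` is locally
positive, `i` is monic, and every morphism from a locally positive object to `G`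
factors (uniquely) through `i`.  Then `G⁺` is a subgroup object: the unit factors
through `G⁺` and multiplication and inversion restrict to `G⁺`. -/
theorem stmt6 {C : Type u} [Category.{v} C] [HasTerminal C] [HasBinaryProducts C]
    (P : C → Prop) (hT : P (⊤_ C)) (hProd : ∀ X Y : C, P X → P Y → P (X ⨯ Y))
    (G Gp : C) (i : Gp ⟶ G) [Mono i] (hGp : P Gp)
    (hmax : ∀ (X : C), P X → ∀ f : X ⟶ G, ∃! g : X ⟶ Gp, g ≫ i = f)
    (e : ⊤_ C ⟶ G) (m : G ⨯ G ⟶ G) (ι : G ⟶ G) :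
    (∃ e' : ⊤_ C ⟶ Gp, e' ≫ i = e) ∧
    (∃ ι' : Gp ⟶ Gp, ι' ≫ i = i ≫ ι) ∧
    (∃ m' : Gp ⨯ Gp ⟶ Gp, m' ≫ i = prod.map i i ≫ m) :=
  stmt6_general P hT hProd G Gp i hGp hmax e m ι
end

section
/- In a 2-category with (2,1)-pullbacks, for an object T the 'isotropy object' I_T defined as the pullback of the diagonal Δ : T → T × T along itself represents, for each object E, the groupoid of pairs (f, θ) where f : E → T is a 1-morphism and θ is a 2-automorphism of f. In particular the two projections I_T → T arising from the pullback square are isomorphic. -/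
open CategoryTheory

universe v₁ v₂ u₁ u₂

variable (E : Type u₁) (T : Type u₂) [Category.{v₁} E] [Category.{v₂} T]

/-- An object of the iso-comma object (pseudo-pullback) of the diagonal
`Δ : T → T × T` along itself, evaluated at `E`: a pair of functors `f, f' : E ⥤ T`
together with two natural isomorphisms `θ, θ' : f ≅ f'`. -/
structure PseudoPB where
  f : E ⥤ T
  f' : E ⥤ T
  θ : f ≅ f'
  θ' : f ≅ f'

/-- A morphism in the pseudo-pullback: a pair of natural transformations
compatible with the structural isomorphisms. -/
@[ext]
structure PseudoPBHom (A B : PseudoPB E T) where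
  α : A.f ⟶ B.f
  α' : A.f' ⟶ B.f'
  w : A.θ.hom ≫ α' = α ≫ B.θ.hom
  w' : A.θ'.hom ≫ α' = α ≫ B.θ'.hom

instance : Category (PseudoPB E T) where
  Hom A B := PseudoPBHom E T A B
  id A := ⟨𝟙 A.f, 𝟙 A.f', by simp, by simp⟩
  comp {A B C} g h := ⟨g.α ≫ h.α, g.α' ≫ h.α',
    by rw [← Category.assoc, g.w, Category.assoc, h.w, ← Category.assoc],
    by rw [← Category.assoc, g.w', Category.assoc, h.w', ← Category.assoc]⟩
  id_comp g := by apply PseudoPBHom.ext <;> simp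
  comp_id g := by apply PseudoPBHom.ext <;> simp
  assoc g h k := by apply PseudoPBHom.ext <;> simp

/-- The 'isotropy groupoid' of `T` evaluated at `E`: pairs `(f, θ)` of a functor
`f : E ⥤ T` and a natural automorphism `θ` of `f`. -/
structure IsoPt where
  f : E ⥤ T
  θ : f ≅ f

/-- Morphisms of pairs `(f, θ)`: natural transformations commuting with the
automorphisms. -/
@[ext]
structure IsoPtHom (A B : IsoPt E T) where
  α : A.f ⟶ B.f
  w : A.θ.hom ≫ α = α ≫ B.θ.hom

instance : Category (IsoPt E T) where
  Hom A B := IsoPtHom E T A B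
  id A := ⟨𝟙 A.f, by simp⟩
  comp {A B C} g h := ⟨g.α ≫ h.α,
    by rw [← Category.assoc, g.w, Category.assoc, h.w, ← Category.assoc]⟩
  id_comp g := by apply IsoPtHom.ext; simp
  comp_id g := by apply IsoPtHom.ext; simp
  assoc g h k := by apply IsoPtHom.ext; simp

/-- The comparison functor `(f, f', θ, θ') ↦ (f, θ'⁻¹ ∘ θ)`. -/
def comparison : PseudoPB E T ⥤ IsoPt E T where
  obj A := ⟨A.f, A.θ ≪≫ A.θ'.symm⟩
  map {A B} g := ⟨g.α, by
    dsimp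
    have h2 : A.θ'.inv ≫ g.α = g.α' ≫ B.θ'.inv := by
      rw [Iso.inv_comp_eq, ← Category.assoc, g.w', Category.assoc, Iso.hom_inv_id,
        Category.comp_id]
    rw [Category.assoc, h2, ← Category.assoc, g.w, Category.assoc]⟩
  map_id A := by apply IsoPtHom.ext; rfl
  map_comp g h := by apply IsoPtHom.ext; rfl

/-- The first projection `I_T → T` of the pseudo-pullback, `(f, f', θ, θ') ↦ f`. -/
def proj₁ : PseudoPB E T ⥤ (E ⥤ T) where
  obj A := A.f
  map g := g.α
  map_id A := rfl
  map_comp g h := rfl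

/-- The second projection `I_T → T` of the pseudo-pullback, `(f, f', θ, θ') ↦ f'`. -/
def proj₂ : PseudoPB E T ⥤ (E ⥤ T) where
  obj A := A.f'
  map g := g.α'
  map_id A := rfl
  map_comp g h := rfl

/-!
Transporting an object `(f, f', θ, θ')` along `θ'` identifies it with `(f, f, θ'⁻¹ ∘ θ, 𝟙)`,
so the second leg and the second 2-cell carry no information: `(f, θ) ↦ (f, f, θ, 𝟙)` is a
quasi-inverse of the comparison functor. The two projections are identified by `θ` itself.
-/

namespace PseudoPB

variable {E T}

@[ext]
lemma hom_ext {A B : PseudoPB E T} {g h : A ⟶ B} (hα : g.α = h.α) (hα' : g.α' = h.α') :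
    g = h :=
  PseudoPBHom.ext hα hα'

def isoMk {A B : PseudoPB E T} (e : A.f ≅ B.f) (e' : A.f' ≅ B.f')
    (w : A.θ.hom ≫ e'.hom = e.hom ≫ B.θ.hom) (w' : A.θ'.hom ≫ e'.hom = e.hom ≫ B.θ'.hom) :
    A ≅ B where
  hom := ⟨e.hom, e'.hom, w, w'⟩
  inv := ⟨e.inv, e'.inv, (CommSq.vert_inv ⟨w⟩).w, (CommSq.vert_inv ⟨w'⟩).w⟩
  hom_inv_id := hom_ext e.hom_inv_id e'.hom_inv_id
  inv_hom_id := hom_ext e.inv_hom_id e'.inv_hom_id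

def transportIso (A : PseudoPB E T) : A ≅ ⟨A.f, A.f, A.θ ≪≫ A.θ'.symm, Iso.refl A.f⟩ :=
  isoMk (Iso.refl A.f) A.θ'.symm (by simp) (by simp)

end PseudoPB

namespace IsoPt

variable {E T}

@[ext]
lemma hom_ext {X Y : IsoPt E T} {g h : X ⟶ Y} (hα : g.α = h.α) : g = h :=
  IsoPtHom.ext hα

def isoMk {X Y : IsoPt E T} (e : X.f ≅ Y.f) (w : X.θ.hom ≫ e.hom = e.hom ≫ Y.θ.hom) :
    X ≅ Y where
  hom := ⟨e.hom, w⟩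
  inv := ⟨e.inv, (CommSq.vert_inv ⟨w⟩).w⟩
  hom_inv_id := hom_ext e.hom_inv_id
  inv_hom_id := hom_ext e.inv_hom_id

variable (E T)

def toPseudoPB : IsoPt E T ⥤ PseudoPB E T where
  obj X := ⟨X.f, X.f, X.θ, Iso.refl X.f⟩
  map g := ⟨g.α, g.α, g.w, by simp⟩

end IsoPt

def comparisonUnitIso : 𝟭 (PseudoPB E T) ≅ comparison E T ⋙ IsoPt.toPseudoPB E T :=
  NatIso.ofComponents PseudoPB.transportIso fun g =>
    PseudoPB.hom_ext ((Category.comp_id _).trans (Category.id_comp _).symm)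
      (CommSq.vert_inv ⟨g.w'.symm⟩).w

def comparisonCounitIso : IsoPt.toPseudoPB E T ⋙ comparison E T ≅ 𝟭 (IsoPt E T) :=
  NatIso.ofComponents
    (fun X => IsoPt.isoMk (X := ⟨X.f, X.θ ≪≫ (Iso.refl X.f).symm⟩) (Iso.refl X.f) (by simp))
    fun g => IsoPt.hom_ext ((Category.comp_id _).trans (Category.id_comp _).symm)

def proj₁IsoProj₂ : proj₁ E T ≅ proj₂ E T :=
  NatIso.ofComponents PseudoPB.θ (fun g => g.w.symm)

/-- The pseudo-pullback of the diagonal `Δ : T → T × T` along itself represents the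
groupoid of pairs `(f : E → T, θ)` with `θ` a 2-automorphism of `f`: the comparison
functor `(f, f', θ₁, θ₂) ↦ (f, θ₂⁻¹ ∘ θ₁)` is an equivalence of categories
(naturally in `E`).  Moreover the two projections `I_T → T` are isomorphic. -/
theorem stmt8 : (comparison E T).IsEquivalence ∧ Nonempty (proj₁ E T ≅ proj₂ E T) :=
  ⟨.mk' (IsoPt.toPseudoPB E T) (comparisonUnitIso E T) (comparisonCounitIso E T),
    ⟨proj₁IsoProj₂ E T⟩⟩
end

section
/- Let T be the category of functors from the category of finite nonempty sets to Set (copresheaves on FinSet_{≠∅}). If F is such a functor with the property that for every finite nonempty set X, every bijection σ : X ≅ X acts as the identity on F(X) (i.e., F(σ) = id), then F maps every map between finite nonempty sets to a bijection and is (naturally isomorphic to) a constant functor. -/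
/-!
Write `ι₁, ι₂ : X → X ⊕ X` for the two inclusions. They differ by the swap of `X ⊕ X`, so `F`
identifies them, and since any two maps `f g : X → Y` factor as `ι₁ ≫ [f, g]` and `ι₂ ≫ [f, g]`,
`F` identifies all parallel maps. A point `1 → X` is then inverse, after applying `F`, to the
terminal map `X → 1`, and every map `h : X → Y` is inverted by `F` because `h ≫ (Y → 1) = X → 1`.
-/

open CategoryTheory

abbrev FinSetPos := ObjectProperty.FullSubcategory (fun X : FintypeCat => Nonempty X)

open Limits

namespace CategoryTheory.Functor

variable {C D : Type*} [Category C] [Category D] (F : C ⥤ D) {T : C} (hT : IsTerminal T)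

theorem isIso_map_from_of_map_comp_eq_id {X : C} (x : T ⟶ X)
    (hx : F.map (hT.from X ≫ x) = 𝟙 (F.obj X)) : IsIso (F.map (hT.from X)) :=
  ⟨F.map x, by rw [← F.map_comp, hx], by rw [← F.map_comp, hT.hom_ext (x ≫ _) (𝟙 T), F.map_id]⟩

theorem map_comp_from_eq_map_from {X Y : C} (f : X ⟶ Y) :
    F.map f ≫ F.map (hT.from Y) = F.map (hT.from X) := by
  rw [← F.map_comp, hT.hom_ext (f ≫ _) (hT.from X)]

theorem isIso_map_of_isIso_map_from [∀ X, IsIso (F.map (hT.from X))] {X Y : C} (f : X ⟶ Y) :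
    IsIso (F.map f) :=
  have : IsIso (F.map f ≫ F.map (hT.from Y)) := by
    rw [map_comp_from_eq_map_from F hT]; infer_instance
  IsIso.of_isIso_comp_right _ (F.map (hT.from Y))

noncomputable def isoConstOfIsTerminal [∀ X, IsIso (F.map (hT.from X))] :
    F ≅ (Functor.const C).obj (F.obj T) :=
  NatIso.ofComponents (fun X => asIso (F.map (hT.from X))) fun f => by
    simpa using map_comp_from_eq_map_from F hT f

end CategoryTheory.Functor

namespace FinSetPos

def homMk {X Y : FinSetPos} (f : X.obj → Y.obj) : X ⟶ Y :=
  ObjectProperty.homMk (FintypeCat.homMk f)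

abbrev punit : FinSetPos := ⟨FintypeCat.of PUnit, ⟨PUnit.unit⟩⟩

def isTerminalPUnit : IsTerminal punit :=
  IsTerminal.ofUniqueHom (fun _ => homMk fun _ => PUnit.unit) fun _ _ =>
    ObjectProperty.hom_ext _ (FintypeCat.hom_ext _ _ fun _ => rfl)

def sumSelf (X : FinSetPos) : FinSetPos :=
  ⟨FintypeCat.of (X.obj ⊕ X.obj), X.property.map Sum.inl⟩

def swap (X : FinSetPos) : sumSelf X ≅ sumSelf X where
  hom := homMk Sum.swap
  inv := homMk Sum.swap
  hom_inv_id := ObjectProperty.hom_ext _ (FintypeCat.hom_ext _ _ Sum.swap_swap)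
  inv_hom_id := ObjectProperty.hom_ext _ (FintypeCat.hom_ext _ _ Sum.swap_swap)

theorem map_eq_map_of_map_swap {E : Type*} [Category E] (F : FinSetPos ⥤ E) {X Y : FinSetPos}
    (hswap : F.map (swap X).hom = 𝟙 (F.obj (sumSelf X))) (f g : X ⟶ Y) : F.map f = F.map g := by
  let inl : X ⟶ sumSelf X := homMk Sum.inl
  let codiag : sumSelf X ⟶ Y := homMk (Sum.elim f.hom g.hom)
  have hinr : inl ≫ (swap X).hom = homMk Sum.inr := rfl
  calc F.map f = F.map inl ≫ F.map codiag := by rw [← F.map_comp]; rfl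
    _ = F.map (inl ≫ (swap X).hom) ≫ F.map codiag := by rw [F.map_comp, hswap, Category.comp_id]
    _ = F.map g := by rw [hinr, ← F.map_comp]; rfl

end FinSetPos

/-- Let `F` be a copresheaf on the category of finite nonempty sets such that
every bijection `σ : X ≅ X` acts as the identity on `F X`.  Then `F` sends every
map between finite nonempty sets to a bijection, and `F` is (naturally isomorphic
to) the constant functor with value `F 1`, where `1` is a one-element set. -/
theorem stmt14 (F : FinSetPos ⥤ Type u)
    (hF : ∀ (X : FinSetPos) (σ : X ≅ X), F.map σ.hom = 𝟙 (F.obj X)) :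
    (∀ (X Y : FinSetPos) (h : X ⟶ Y), Function.Bijective (F.map h)) ∧
    Nonempty (F ≅ (Functor.const FinSetPos).obj
      (F.obj ⟨FintypeCat.of PUnit, ⟨PUnit.unit⟩⟩)) := by
  let hT := FinSetPos.isTerminalPUnit
  have (X : FinSetPos) : IsIso (F.map (hT.from X)) :=
    let ⟨x⟩ := X.property
    F.isIso_map_from_of_map_comp_eq_id hT (FinSetPos.homMk fun _ => x)
      (by rw [FinSetPos.map_eq_map_of_map_swap F (hF _ _) _ (𝟙 X), F.map_id])
  exact ⟨fun X Y h => (isIso_iff_bijective _).1 (F.isIso_map_of_isIso_map_from hT h),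
    ⟨F.isoConstOfIsTerminal hT⟩⟩
end
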